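/- For every finite connected simple graph G, the chromatic number χ(G) satisfies χ(G) ≤ C_G^0 = 1 + r(A_G), where r(A_G) is the spectral radius of the adjacency matrix. -/

import Mathlib

/-!
Wilf's argument. For a real symmetric matrix `A` whose eigenvalues are at most `r`, the quadratic
form satisfies `xᵀ A x ≤ r ‖x‖²`. Evaluated at the indicator vector of a vertex set `S`, this says
that the degrees inside `S` sum to at most `r |S|`, so some vertex of `S` has at most `⌊r⌋` neighbours
in `S`. A graph all of whose vertex sets contain such a vertex is greedily `(⌊r⌋ + 1)`-colourable:
remove the low-degree vertex, colour the rest, and give it a colour unused by its neighbours.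
-/

open Finset Matrix
open scoped MatrixOrder

theorem Matrix.IsHermitian.dotProduct_mulVec_le {n : Type*} [Fintype n] [DecidableEq n]
    {A : Matrix n n ℝ} (hA : A.IsHermitian) {r : ℝ} (hr : ∀ x ∈ spectrum ℝ A, x ≤ r)
    (x : n → ℝ) : x ⬝ᵥ A *ᵥ x ≤ r * (x ⬝ᵥ x) := by
  have h : A ≤ algebraMap ℝ _ r := le_algebraMap_of_spectrum_le hr hA.isSelfAdjoint
  have hx := (Matrix.le_iff.mp h).dotProduct_mulVec_nonneg x
  rw [Algebra.algebraMap_eq_smul_one, sub_mulVec, smul_mulVec, one_mulVec, dotProduct_sub,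
    dotProduct_smul] at hx
  simpa [sub_nonneg] using hx

theorem dotProduct_indicator_self {V α : Type*} [Fintype V] [DecidableEq V] [NonAssocSemiring α]
    (S : Finset V) :
    (fun v ↦ if v ∈ S then (1 : α) else 0) ⬝ᵥ (fun v ↦ if v ∈ S then 1 else 0) = #S := by
  simp [dotProduct]

namespace SimpleGraph

variable {V : Type*} [DecidableEq V] (G : SimpleGraph V) [DecidableRel G.Adj]

theorem dotProduct_adjMatrix_mulVec_indicator [Fintype V] {α : Type*} [NonAssocSemiring α]
    (S : Finset V) :
    (fun v ↦ if v ∈ S then (1 : α) else 0) ⬝ᵥ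
        G.adjMatrix α *ᵥ (fun v ↦ if v ∈ S then 1 else 0) =
      ∑ v ∈ S, (#{u ∈ S | G.Adj v u} : α) := by
  simp [dotProduct, neighborFinset_eq_filter, inter_comm, inter_filter]

theorem exists_card_adj_le_of_spectrum_le [Fintype V] {r : ℝ}
    (hr : ∀ x ∈ spectrum ℝ (G.adjMatrix ℝ), x ≤ r) {S : Finset V} (hS : S.Nonempty) :
    ∃ v ∈ S, (#{u ∈ S | G.Adj v u} : ℝ) ≤ r := by
  refine exists_le_of_sum_le hS ?_
  have h := (G.isHermitian_adjMatrix ℝ).dotProduct_mulVec_le hr fun v ↦ if v ∈ S then 1 else 0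
  rw [dotProduct_adjMatrix_mulVec_indicator, dotProduct_indicator_self] at h
  simpa [mul_comm] using h

def IsProperColoringOn {α : Type*} (c : V → α) (S : Finset V) : Prop :=
  ∀ u ∈ S, ∀ w ∈ S, G.Adj u w → c u ≠ c w

theorem exists_isProperColoringOn_update {d : ℕ} {c : V → Fin (d + 1)} {S : Finset V} {v : V}
    (hc : G.IsProperColoringOn c (S.erase v)) (hv : #{u ∈ S | G.Adj v u} ≤ d) :
    ∃ a, G.IsProperColoringOn (Function.update c v a) S := by
  obtain ⟨a, -, ha⟩ := exists_mem_notMem_of_card_lt_card (s := image c {u ∈ S | G.Adj v u})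
    (t := univ) (by simpa using card_image_le.trans_lt (Nat.lt_succ_of_le hv))
  simp only [mem_image, mem_filter, not_exists, not_and] at ha
  refine ⟨a, fun u hu w hw huw ↦ ?_⟩
  rcases eq_or_ne u v with rfl | hu'
  · rw [Function.update_self, Function.update_of_ne (G.ne_of_adj huw).symm]
    exact fun h ↦ ha w ⟨hw, huw⟩ h.symm
  rcases eq_or_ne w v with rfl | hw'
  · rw [Function.update_self, Function.update_of_ne hu']
    exact ha u ⟨hu, huw.symm⟩
  rw [Function.update_of_ne hu', Function.update_of_ne hw']
  exact hc u (mem_erase.2 ⟨hu', hu⟩) w (mem_erase.2 ⟨hw', hw⟩) huw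

theorem colorable_succ_of_forall_exists_card_adj_le [Fintype V] (d : ℕ)
    (h : ∀ S : Finset V, S.Nonempty → ∃ v ∈ S, #{u ∈ S | G.Adj v u} ≤ d) :
    G.Colorable (d + 1) := by
  suffices ∀ S : Finset V, ∃ c : V → Fin (d + 1), G.IsProperColoringOn c S by
    obtain ⟨c, hc⟩ := this univ
    exact ⟨Coloring.mk c fun huw ↦ hc _ (mem_univ _) _ (mem_univ _) huw⟩
  intro S
  induction S using strongInduction with
  | _ S ih =>
    obtain rfl | hS := S.eq_empty_or_nonempty
    · exact ⟨0, by simp [IsProperColoringOn]⟩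
    obtain ⟨v, hvS, hv⟩ := h S hS
    obtain ⟨c, hc⟩ := ih _ (erase_ssubset hvS)
    obtain ⟨a, ha⟩ := G.exists_isProperColoringOn_update hc hv
    exact ⟨_, ha⟩

end SimpleGraph

open SimpleGraph in
theorem stmt_5 {V : Type*} [Fintype V] [DecidableEq V] (G : SimpleGraph V)
    [DecidableRel G.Adj] :
    (G.chromaticNumber.toNat : ℝ) ≤ 1 + sSup (spectrum ℝ (G.adjMatrix ℝ)) := by
  set r := sSup (spectrum ℝ (G.adjMatrix ℝ))
  have hr (x) (hx : x ∈ spectrum ℝ (G.adjMatrix ℝ)) : x ≤ r :=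
    le_csSup Matrix.finite_real_spectrum.bddAbove hx
  obtain _ | ⟨⟨v⟩⟩ := isEmpty_or_nonempty V
  · -- over an empty vertex type the matrix ring is trivial, its spectrum empty and `r = sSup ∅ = 0`
    simp [chromaticNumber_eq_zero_of_isEmpty, r, spectrum.of_subsingleton]
  have hr_nonneg : 0 ≤ r := by
    obtain ⟨_, _, h⟩ := G.exists_card_adj_le_of_spectrum_le hr (singleton_nonempty v)
    exact (Nat.cast_nonneg _).trans h
  have hcol : G.Colorable (⌊r⌋₊ + 1) :=
    G.colorable_succ_of_forall_exists_card_adj_le _ fun S hS ↦ by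
      obtain ⟨v, hv, h⟩ := G.exists_card_adj_le_of_spectrum_le hr hS
      exact ⟨v, hv, Nat.le_floor h⟩
  calc (G.chromaticNumber.toNat : ℝ) ≤ ⌊r⌋₊ + 1 := by
        exact_mod_cast ENat.toNat_le_of_le_natCast hcol.chromaticNumber_le
    _ ≤ 1 + r := by linarith [Nat.floor_le hr_nonneg]
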